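/- (Lemma 1) For every integer N ≥ 4, one has G(N) = N²/2 + 2R₁(N) + Σ_{n ≤ N} Λ₀(n) R(N − n) + O(N), i.e. there is an absolute constant K such that |G(N) − N²/2 − 2R₁(N) − Σ_{n ≤ N} Λ₀(n)R(N − n)| ≤ K·N for all N ≥ 4. -/

import Mathlib

noncomputable def Lam (n : ℕ) : ℝ := ArithmeticFunction.vonMangoldt n

/-- ψ₂(n) = Σ_{m+m'=n, m,m'≥1} Λ(m)Λ(m')  (terms with m = 0 vanish since Λ(0)=0). -/
noncomputable def psi2 (n : ℕ) : ℝ := ∑ m ∈ Finset.range n, Lam m * Lam (n - m)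

/-- G(N) = Σ_{n ≤ N} ψ₂(n). -/
noncomputable def G (N : ℕ) : ℝ := ∑ n ∈ Finset.Icc 1 N, psi2 n

/-- ψ(x) = Σ_{n ≤ x} Λ(n). -/
noncomputable def psi (x : ℝ) : ℝ := ∑ n ∈ Finset.Icc 1 ⌊x⌋₊, Lam n

/-- R(x) = ψ(x) − x. -/
noncomputable def RR (x : ℝ) : ℝ := psi x - x

/-- ψ₁(x) = Σ_{n ≤ x} (x − n)Λ(n). -/
noncomputable def psi1 (x : ℝ) : ℝ := ∑ n ∈ Finset.Icc 1 ⌊x⌋₊, (x - (n : ℝ)) * Lam n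

/-- R₁(x) = ψ₁(x) − x²/2. -/
noncomputable def R1 (x : ℝ) : ℝ := psi1 x - x ^ 2 / 2

/-- Λ₀(n) = Λ(n) − 1 for n ≥ 1, and 0 otherwise. -/
noncomputable def Lam0 (n : ℕ) : ℝ := if 1 ≤ n then Lam n - 1 else 0

/-- ψ₂⁰(n) = Σ_{m+m'=n, m,m'≥1} Λ₀(m)Λ₀(m')  (the m = 0 term vanishes since Λ₀(0)=0). -/
noncomputable def psi20 (n : ℕ) : ℝ := ∑ m ∈ Finset.range n, Lam0 m * Lam0 (n - m)

/-- Ψ(z) = Σ_{n ≥ 1} Λ(n) zⁿ. -/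
noncomputable def PsiC (z : ℂ) : ℂ := ∑' n : ℕ, (Lam n : ℂ) * z ^ n

/-- K_N(z) = Σ_{n=1}^{N} z^{−n}. -/
noncomputable def KN (N : ℕ) (z : ℂ) : ℂ := ∑ n ∈ Finset.Icc 1 N, z ^ (-(n : ℤ))

/-- ω(x) = inf_{u ≥ 1} (η(u)·log x + log u). -/
noncomputable def omegaFn (η : ℝ → ℝ) (x : ℝ) : ℝ :=
  sInf ((fun u => η u * Real.log x + Real.log u) '' Set.Ici 1)

/-- ϖ(x) = inf_{u ≥ 0} (η(u)·log x + u). -/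
noncomputable def varpi (η : ℝ → ℝ) (x : ℝ) : ℝ :=
  sInf ((fun u => η u * Real.log x + u) '' Set.Ici 0)

/-- F(N) = Σ_{n ≥ 1} ψ₂(n) e^{−n/N}  (the n = 0 term vanishes since ψ₂(0)=0). -/
noncomputable def Fav (N : ℕ) : ℝ := ∑' n : ℕ, psi2 n * Real.exp (-(n : ℝ) / N)


/-! Expanding the convolution gives the exact identity `G(N) = Σ_{m ≤ N} Λ(m) ψ(N - m)`.
Writing `Λ = 1 + Λ₀` and `ψ(x) = x + R(x)`, both `Σ_m Λ(m) (N - m)` and `Σ_m ψ(N - m)` equal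
`ψ₁(N)`, so the error term in the statement is exactly `N / 2`. -/

open Finset

theorem sum_Ioc_sub_eq_sum_Icc {M : Type*} [AddCommMonoid M] (g : ℕ → M) (m N : ℕ) :
    ∑ n ∈ Ioc m N, g (n - m) = ∑ k ∈ Icc 1 (N - m), g k := by
  apply sum_nbij' (· - m) (· + m) <;> intro a ha <;> simp_all only [mem_Ioc, mem_Icc] <;>
    omega

theorem sum_Icc_sum_range_mul_sub {R : Type*} [NonUnitalNonAssocSemiring R] (f g : ℕ → R)
    (hf : f 0 = 0) (N : ℕ) :
    ∑ n ∈ Icc 1 N, ∑ m ∈ range n, f m * g (n - m) =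
      ∑ m ∈ Icc 1 N, f m * ∑ k ∈ Icc 1 (N - m), g k := by
  calc ∑ n ∈ Icc 1 N, ∑ m ∈ range n, f m * g (n - m)
      = ∑ n ∈ Icc 1 N, ∑ m ∈ Ico 1 n, f m * g (n - m) := by
        refine sum_congr rfl fun n hn => ?_
        rw [range_eq_Ico, sum_eq_sum_Ico_succ_bot (by simp at hn; omega), hf, zero_mul, zero_add]
    _ = ∑ m ∈ Icc 1 N, ∑ n ∈ Ioc m N, f m * g (n - m) :=
        sum_comm' fun n m => by simp only [mem_Icc, mem_Ico, mem_Ioc]; omega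
    _ = ∑ m ∈ Icc 1 N, f m * ∑ k ∈ Icc 1 (N - m), g k := by
        simp only [← mul_sum, sum_Ioc_sub_eq_sum_Icc]

theorem sum_Icc_sum_Icc_sub {R : Type*} [NonAssocSemiring R] (g : ℕ → R) (N : ℕ) :
    ∑ m ∈ Icc 1 N, ∑ k ∈ Icc 1 (N - m), g k = ∑ k ∈ Icc 1 N, ((N - k : ℕ) : R) * g k := by
  rw [sum_comm' (t' := Icc 1 N) (s' := fun k => Icc 1 (N - k))
    fun m k => by simp only [mem_Icc]; omega]
  simp [sum_const, nsmul_eq_mul]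

theorem sum_Icc_natCast_sub (N : ℕ) : ∑ m ∈ Icc 1 N, ((N : ℝ) - m) = N * (N - 1) / 2 := by
  induction N with
  | zero => simp
  | succ N ih =>
    rw [sum_Icc_succ_top (by omega)]
    simp only [Nat.cast_succ, add_sub_right_comm _ (1 : ℝ), sum_add_distrib, ih, sum_const,
      Nat.card_Icc, nsmul_eq_mul, add_tsub_cancel_right]
    ring

theorem Lam_zero : Lam 0 = 0 := by simp [Lam]

theorem psi_natCast (n : ℕ) : psi n = ∑ k ∈ Icc 1 n, Lam k := by
  rw [psi, Nat.floor_natCast]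

theorem psi1_natCast (N : ℕ) : psi1 N = ∑ n ∈ Icc 1 N, ((N : ℝ) - n) * Lam n := by
  rw [psi1, Nat.floor_natCast]

theorem psi_natCast_sub {m N : ℕ} (hm : m ≤ N) :
    psi ((N : ℝ) - m) = ∑ k ∈ Icc 1 (N - m), Lam k := by
  rw [← Nat.cast_sub hm, psi_natCast]

theorem G_eq_sum_Lam_mul_psi (N : ℕ) : G N = ∑ m ∈ Icc 1 N, Lam m * psi ((N : ℝ) - m) := by
  rw [G, sum_congr rfl fun n _ => psi2.eq_def n, sum_Icc_sum_range_mul_sub _ _ Lam_zero]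
  exact sum_congr rfl fun m hm => by rw [psi_natCast_sub (mem_Icc.1 hm).2]

theorem sum_psi_natCast_sub (N : ℕ) : ∑ m ∈ Icc 1 N, psi ((N : ℝ) - m) = psi1 N := by
  rw [sum_congr rfl fun m hm => psi_natCast_sub (mem_Icc.1 hm).2, sum_Icc_sum_Icc_sub,
    psi1_natCast]
  exact sum_congr rfl fun k hk => by rw [Nat.cast_sub (mem_Icc.1 hk).2]

theorem G_sub_main_terms_eq_half (N : ℕ) :
    G N - (N : ℝ) ^ 2 / 2 - 2 * R1 N - ∑ n ∈ Icc 1 N, Lam0 n * RR ((N : ℝ) - n) = N / 2 := by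
  have hLam : ∀ m ∈ Icc 1 N, Lam m * psi ((N : ℝ) - m) =
      Lam0 m * RR ((N : ℝ) - m) + psi ((N : ℝ) - m) + ((N : ℝ) - m) * Lam m - ((N : ℝ) - m) := by
    intro m hm
    rw [Lam0, if_pos (mem_Icc.1 hm).1, RR]
    ring
  rw [G_eq_sum_Lam_mul_psi, sum_congr rfl hLam, sum_sub_distrib, sum_add_distrib, sum_add_distrib,
    sum_psi_natCast_sub, ← psi1_natCast, sum_Icc_natCast_sub, R1]
  ring

/-- Lemma 1: G(N) = N²/2 + 2R₁(N) + Σ_{n ≤ N} Λ₀(n)R(N−n) + O(N) for N ≥ 4. -/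
theorem stmt_0 : ∃ K : ℝ, ∀ N : ℕ, 4 ≤ N →
    |G N - (N : ℝ) ^ 2 / 2 - 2 * R1 N -
        ∑ n ∈ Finset.Icc 1 N, Lam0 n * RR ((N : ℝ) - (n : ℝ))| ≤ K * N := by
  refine ⟨1 / 2, fun N _ => ?_⟩
  rw [G_sub_main_terms_eq_half, abs_of_nonneg (by positivity)]
  exact le_of_eq (by ring)
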